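/- Let g be a finite-dimensional real Lie algebra equipped with an inner product ⟨·,·⟩; for u ∈ g let ad_u : g → g denote v ↦ ⁅u,v⁆ and ad*_u its adjoint with respect to ⟨·,·⟩. Let X ∈ g satisfy ad*_X = −ad_X and let Φ(t) := exp(t·ad_X). Suppose V, W : ℝ → g are differentiable and satisfy, for all t: V'(t) = −ad*_{V(t)} V(t) + ad*_{W(t)} W(t) − ad*_{V(t)} X, W'(t) = −ad*_{V(t)} W(t) − ad*_{W(t)} V(t) − ad*_{W(t)} X, and ad*_{W(t)} W(t) = 0. Then U(t) := X + Φ(t)(V(t)) satisfies the Euler–Arnold equation U'(t) = −ad*_{U(t)} U(t) for all t, and Y(t) := Φ(t)(W(t)) satisfies the linearized Euler–Arnold equation Y'(t) + ad*_{U(t)} Y(t) + ad*_{Y(t)} U(t) = 0 for all t. -/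

import Mathlib

open scoped RealInnerProductSpace

variable {g : Type*} [NormedAddCommGroup g] [InnerProductSpace ℝ g] [FiniteDimensional ℝ g]

/-- The adjoint operator `ad_u : v ↦ ⁅u, v⁆` of a Lie bracket `br`, as a
continuous linear map on the finite-dimensional space `g`. -/
noncomputable def adOp (br : g →ₗ[ℝ] g →ₗ[ℝ] g) (u : g) : g →L[ℝ] g :=
  LinearMap.toContinuousLinearMap (br u)

/-- The coadjoint operator `ad*_u`, the adjoint of `ad_u` with respect to the
inner product. -/
noncomputable def adStarOp (br : g →ₗ[ℝ] g →ₗ[ℝ] g) (u : g) : g →L[ℝ] g :=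
  ContinuousLinearMap.adjoint (adOp br u)

/-- The operator exponential `Φ(t) = exp(t ad_X)`. -/
noncomputable def phiExp (br : g →ₗ[ℝ] g →ₗ[ℝ] g) (X : g) (t : ℝ) : g →L[ℝ] g :=
  NormedSpace.exp (t • adOp br X)

/-!
`Φ(t) = exp (t • ad_X)` is the flow of the linear equation `y' = ad_X y`. Since `ad_X` is a
derivation (Jacobi) and skew-adjoint, `Φ(t)` is an orthogonal Lie algebra automorphism fixing `X`;
hence it intertwines the coadjoint operators, `ad*_{Φ u} (Φ w) = Φ (ad*_u w)`. Differentiating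
`U = X + Φ V` and `Y = Φ W` then turns both claimed equations, term by term, into `Φ(t)` applied to
the equations for `V` and `W`; the one term without a counterpart is `ad*_W W`, which vanishes.
-/

open NormedSpace

section LinearODE

variable {E : Type*} [NormedAddCommGroup E] [NormedSpace ℝ E] [CompleteSpace E] (A : E →L[ℝ] E)

theorem hasDerivAt_exp_smul_apply {w : ℝ → E} {w' : E} {t : ℝ} (hw : HasDerivAt w w' t) :
    HasDerivAt (fun s => exp (s • A) (w s)) (A (exp (t • A) (w t)) + exp (t • A) w') t := by
  simpa using (hasDerivAt_exp_smul_const' (𝕂 := ℝ) A t).clm_apply hw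

theorem exp_smul_mul_exp_smul (s t : ℝ) : exp (s • A) * exp (t • A) = exp ((s + t) • A) := by
  rw [add_smul]
  refine (exp_add_of_commute_of_mem_ball (𝕂 := ℝ) ((Commute.refl A).smul_left s |>.smul_right t)
    ?_ ?_).symm <;> exact (expSeries_radius_eq_top ℝ (E →L[ℝ] E)).symm ▸ edist_lt_top _ _

theorem exp_smul_apply_exp_neg_smul (t : ℝ) (x : E) : exp (t • A) (exp (-t • A) x) = x := by
  rw [← mul_apply_eq_comp, exp_smul_mul_exp_smul, add_neg_cancel, zero_smul,
    exp_zero, one_apply_eq_self]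

theorem eq_exp_smul_apply_of_hasDerivAt {y : ℝ → E} (hy : ∀ s, HasDerivAt y (A (y s)) s) (t : ℝ) :
    y t = exp (t • A) (y 0) := by
  have hconst : ∀ s, HasDerivAt (fun s => exp (s • -A) (y s)) 0 s := fun s => by
    have hcomm : Commute A (exp (s • -A)) := ((Commute.refl A).neg_right.smul_right s).exp_right
    convert hasDerivAt_exp_smul_apply (-A) (hy s) using 1
    exact (neg_add_eq_zero.mpr (DFunLike.congr_fun hcomm.eq (y s))).symm
  have h := is_const_of_deriv_eq_zero (fun s => (hconst s).differentiableAt)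
    (fun s => (hconst s).deriv) t 0
  rw [zero_smul, exp_zero, one_apply_eq_self, smul_neg, ← neg_smul] at h
  rw [← h, exp_smul_apply_exp_neg_smul]

theorem exp_smul_apply_of_apply_eq_zero {x : E} (hx : A x = 0) (t : ℝ) : exp (t • A) x = x :=
  (eq_exp_smul_apply_of_hasDerivAt A (y := fun _ => x) (fun s => hx ▸ hasDerivAt_const s x) t).symm

end LinearODE

section BilinearBracket

variable {M : Type*} [AddCommGroup M] [Module ℝ M] (br : M →ₗ[ℝ] M →ₗ[ℝ] M)

theorem bracket_self_eq_zero (hanti : ∀ x y : M, br x y = -br y x) (x : M) : br x x = 0 := by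
  have h : (2 : ℝ) • br x x = 0 := by
    rw [two_smul]
    nth_rewrite 2 [hanti]
    exact add_neg_cancel _
  simpa using h

theorem bracket_leibniz (hanti : ∀ x y : M, br x y = -br y x)
    (hjacobi : ∀ x y z : M, br (br x y) z + br (br y z) x + br (br z x) y = 0) (X x y : M) :
    br X (br x y) = br (br X x) y + br x (br X y) := by
  have h := hjacobi X x y
  rw [hanti (br x y) X, hanti (br y X) x, hanti y X, map_neg, neg_neg] at h
  rw [eq_comm, ← sub_eq_zero, ← h]
  abel

end BilinearBracket

section Bracket

variable (br : g →ₗ[ℝ] g →ₗ[ℝ] g)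

@[simp] theorem adOp_apply (u v : g) : adOp br u v = br u v := rfl

theorem adOp_add (u v : g) : adOp br (u + v) = adOp br u + adOp br v := by
  ext w; simp

theorem adStarOp_add (u v : g) : adStarOp br (u + v) = adStarOp br u + adStarOp br v := by
  simp only [adStarOp, adOp_add, map_add]

theorem adStarOp_eq_star (u : g) : adStarOp br u = star (adOp br u) :=
  (ContinuousLinearMap.star_eq_adjoint _).symm

theorem hasDerivAt_bracket {a b : ℝ → g} {a' b' : g} {t : ℝ} (ha : HasDerivAt a a' t)
    (hb : HasDerivAt b b' t) :
    HasDerivAt (fun s => br (a s) (b s)) (br a' (b t) + br (a t) b') t := by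
  let B : g →L[ℝ] g →L[ℝ] g :=
    LinearMap.toContinuousLinearMap (LinearMap.toContinuousLinearMap.toLinearMap ∘ₗ br)
  rw [add_comm]
  exact B.hasDerivAt_of_bilinear (fun _ => ha) (fun _ => hb)

theorem adStarOp_apply_of_mem_unitary {U : g →L[ℝ] g}
    (hU : U ∈ unitary (g →L[ℝ] g)) (hUbr : ∀ u v, br (U u) (U v) = U (br u v)) (u w : g) :
    adStarOp br (U u) (U w) = U (adStarOp br u w) := by
  have hconj : adOp br (U u) = U * adOp br u * star U := by
    ext z
    conv_lhs => rw [← one_apply_eq_self (F := g →L[ℝ] g) z, ← Unitary.mul_star_self_of_mem hU]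
    exact hUbr u (star U z)
  rw [adStarOp_eq_star, hconj, star_mul, star_mul, star_star, ← adStarOp_eq_star, mul_apply_eq_comp,
    mul_apply_eq_comp, ← mul_apply_eq_comp (star U), Unitary.star_mul_self_of_mem hU,
    one_apply_eq_self]

end Bracket

section Flow

variable (br : g →ₗ[ℝ] g →ₗ[ℝ] g) (X : g)

theorem hasDerivAt_phiExp_apply {w : ℝ → g} {w' : g} {t : ℝ} (hw : HasDerivAt w w' t) :
    HasDerivAt (fun s => phiExp br X s (w s))
      (adOp br X (phiExp br X t (w t)) + phiExp br X t w') t :=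
  hasDerivAt_exp_smul_apply _ hw

theorem phiExp_apply_self (hanti : ∀ x y : g, br x y = -br y x) (t : ℝ) : phiExp br X t X = X :=
  exp_smul_apply_of_apply_eq_zero _ (bracket_self_eq_zero br hanti X) t

theorem phiExp_bracket (hanti : ∀ x y : g, br x y = -br y x)
    (hjacobi : ∀ x y z : g, br (br x y) z + br (br y z) x + br (br z x) y = 0) (t : ℝ) (u v : g) :
    br (phiExp br X t u) (phiExp br X t v) = phiExp br X t (br u v) := by
  have hflow (w : g) (s : ℝ) :
      HasDerivAt (fun s => phiExp br X s w) (adOp br X (phiExp br X s w)) s := by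
    simpa using hasDerivAt_phiExp_apply br X (hasDerivAt_const s w)
  have h := eq_exp_smul_apply_of_hasDerivAt (adOp br X)
    (y := fun s => br (phiExp br X s u) (phiExp br X s v)) (fun s => by
      rw [adOp_apply, bracket_leibniz br hanti hjacobi]
      exact hasDerivAt_bracket br (hflow u s) (hflow v s)) t
  simpa [phiExp] using h

theorem phiExp_mem_unitary (hX : adStarOp br X = -adOp br X) (t : ℝ) :
    phiExp br X t ∈ unitary (g →L[ℝ] g) :=
  letI : NormedAlgebra ℚ (g →L[ℝ] g) := NormedAlgebra.restrictScalars ℚ ℝ _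
  exp_mem_unitary_of_mem_skewAdjoint <| by
    rw [skewAdjoint.mem_iff, star_smul, star_trivial, ← adStarOp_eq_star, hX, smul_neg]

theorem adStarOp_phiExp_apply_phiExp (hanti : ∀ x y : g, br x y = -br y x)
    (hjacobi : ∀ x y z : g, br (br x y) z + br (br y z) x + br (br z x) y = 0)
    (hX : adStarOp br X = -adOp br X) (t : ℝ) (u w : g) :
    adStarOp br (phiExp br X t u) (phiExp br X t w) = phiExp br X t (adStarOp br u w) :=
  adStarOp_apply_of_mem_unitary br (phiExp_mem_unitary br X hX t)
    (phiExp_bracket br X hanti hjacobi t) u w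

end Flow

/-- Theorem 5.5 in the finite-dimensional real Lie algebra
setting (the Lie algebra is a finite-dimensional real inner product space `g`
with an antisymmetric bilinear bracket `br` satisfying the Jacobi identity).
If `Z = V + iW` solves the Euler–Arnold equation with generalized Coriolis
force (written out in real and imaginary parts) and `ad*_W W = 0`, then
`U(t) = X + Φ(t)(V(t))` solves the Euler–Arnold equation `U' = -ad*_U U` and
`Y(t) = Φ(t)(W(t))` solves the linearized equation
`Y' + ad*_U Y + ad*_Y U = 0`. -/
theorem statement15 (br : g →ₗ[ℝ] g →ₗ[ℝ] g)
    (hanti : ∀ x y : g, br x y = -br y x)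
    (hjacobi : ∀ x y z : g, br (br x y) z + br (br y z) x + br (br z x) y = 0)
    (X : g) (hX : adStarOp br X = -adOp br X)
    (V W : ℝ → g)
    (hV : ∀ t : ℝ, HasDerivAt V
      (-(adStarOp br (V t) (V t)) + adStarOp br (W t) (W t) - adStarOp br (V t) X) t)
    (hW : ∀ t : ℝ, HasDerivAt W
      (-(adStarOp br (V t) (W t)) - adStarOp br (W t) (V t) - adStarOp br (W t) X) t)
    (hWW : ∀ t : ℝ, adStarOp br (W t) (W t) = 0) :
    (∀ t : ℝ,
      HasDerivAt (fun s : ℝ => X + phiExp br X s (V s))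
        (-(adStarOp br (X + phiExp br X t (V t)) (X + phiExp br X t (V t)))) t) ∧
    (∀ t : ℝ,
      HasDerivAt (fun s : ℝ => phiExp br X s (W s))
        (-(adStarOp br (X + phiExp br X t (V t)) (phiExp br X t (W t)))
          - adStarOp br (phiExp br X t (W t)) (X + phiExp br X t (V t))) t) := by
  have hXX : adOp br X X = 0 := bracket_self_eq_zero br hanti X
  have hadStarX (w : g) : adStarOp br X w = -adOp br X w := by rw [hX]; rfl
  have hconj := adStarOp_phiExp_apply_phiExp br X hanti hjacobi hX
  have hconjX (t : ℝ) (u : g) :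
      adStarOp br (phiExp br X t u) X = phiExp br X t (adStarOp br u X) := by
    rw [← hconj, phiExp_apply_self br X hanti]
  refine ⟨fun t => ?_, fun t => ?_⟩
  · convert (hasDerivAt_phiExp_apply br X (hV t)).const_add X using 1
    simp only [adStarOp_add, add_apply, map_add, hadStarX, hXX, hconj, hconjX,
      hWW, map_sub, map_neg, map_zero]
    abel
  · convert hasDerivAt_phiExp_apply br X (hW t) using 1
    simp only [adStarOp_add, add_apply, map_add, hadStarX, hconj, hconjX,
      map_sub, map_neg]
    abel
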